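/- Under the KKT conditions for the delay minimization problem, if the energy constraint multiplier λ₁ = 0, then the optimal computational allocation is χ_n* = 1: assuming χ_n < 1 forces λ₃ = -μζ_n/(χ_n² G_n) < 0, contradicting dual feasibility λ₃ ≥ 0. -/
import Mathlib


/-- KKT Case 1: if the energy-constraint multiplier `λ₁ = 0`, then the optimal
computational allocation is `χ = 1`. -/
theorem kkt_case_no_energy_binding (μ ζ G κ : ℝ) (hμ : 0 < μ) (hζ : 0 < ζ)
    (hG : 0 < G) (hκ : 0 < κ)
    (χ lam1 lam3 lam4 : ℝ) (hχ0 : 0 < χ) (hχ1 : χ ≤ 1)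
    (hlam1 : lam1 = 0) (hlam3 : 0 ≤ lam3) (hlam4 : 0 ≤ lam4)
    (hstat : -(μ * ζ) / (χ ^ 2 * G) + 2 * lam1 * κ * μ * ζ * G ^ 2 * χ - lam3 + lam4 = 0)
    (hcs3 : lam3 * χ = 0) (hcs4 : lam4 * (χ - 1) = 0) :
    χ = 1 := by
  have h3 : lam3 = 0 := by
    rcases mul_eq_zero.mp hcs3 with h | h
    · exact h
    · exact absurd h hχ0.ne'
  subst hlam1 h3
  have hpos : 0 < μ * ζ / (χ ^ 2 * G) :=
    div_pos (mul_pos hμ hζ) (mul_pos (pow_pos hχ0 2) hG)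
  have h4 : lam4 = μ * ζ / (χ ^ 2 * G) := by
    field_simp at hstat ⊢
    linarith
  rcases mul_eq_zero.mp hcs4 with h | h
  · rw [h4] at h; linarith
  · linarith
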